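/- arXiv:1208.0364 — 3 statements merged into one kernel-verified Lean document; each statement's English description precedes it below -/
import Mathlib

section
/- Let G be a locally finite graph, x₀ a vertex, and e = (x₀, y) an edge. For reinforced random walk on G started at x₀ with reinforcement function f(n) = 1 + n², with positive probability the walk traverses e back and forth forever, i.e. x_{2t} = x₀ and x_{2t+1} = y for all t ≥ 0. -/
/-!
Every step of the oscillating walk crosses the same edge, so at time `i` that edge carries
weight `1 + i²` while the other `deg - 1` edges at the current vertex still carry weight `1`.
The `i`-th factor of the path probability is therefore `(1 + i²) / (deg + i²)`, which is at
least `exp (-(D - 1) / (1 + i²))` with `D` the larger of the two degrees; since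
`∑ 1 / (1 + i²)` converges, the product stays above a positive constant.
-/

/-- `ntrav γ t e` is the number of traversals `N(e,t)` of the undirected edge
`e` by the walk `γ` during the first `t` steps, counting both directions. -/
def ntrav {V : Type*} [DecidableEq V] (γ : ℕ → V) (t : ℕ) (e : Sym2 V) : ℕ :=
  ((Finset.range t).filter (fun s => s(γ s, γ (s+1)) = e)).card

/-- The probability that the reinforced random walk with reinforcement
function `f` on the locally finite graph `G` begins with the first `l` steps
of the walk `γ`: the product over each step of
`f(N((γ_i,γ_{i+1}),i))` normalized over the neighbours of `γ_i`. -/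
noncomputable def pathProb {V : Type*} [DecidableEq V] (G : SimpleGraph V)
    [∀ v : V, Fintype (G.neighborSet v)] (f : ℕ → ℝ) (γ : ℕ → V) (l : ℕ) : ℝ :=
  ∏ i ∈ Finset.range l,
    f (ntrav γ i s(γ i, γ (i+1))) /
      ∑ z ∈ G.neighborFinset (γ i), f (ntrav γ i s(γ i, z))

open Real Finset

lemma summable_inv_one_add_sq : Summable fun n : ℕ => (1 + (n : ℝ) ^ 2)⁻¹ := by
  refine (summable_nat_add_iff 1).1 <|
    ((summable_nat_add_iff 1).2 (summable_nat_pow_inv.2 one_lt_two)).of_nonneg_of_le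
      (fun n => by positivity) fun n => ?_
  gcongr
  linarith

lemma exp_neg_tsum_le_prod_inv_one_add {ι : Type*} {a : ι → ℝ} (ha : ∀ i, 0 ≤ a i)
    (hs : Summable a) (s : Finset ι) :
    exp (-∑' i, a i) ≤ ∏ i ∈ s, (1 + a i)⁻¹ :=
  calc exp (-∑' i, a i) ≤ exp (-∑ i ∈ s, a i) :=
        exp_le_exp.2 <| neg_le_neg <| hs.sum_le_tsum s fun i _ => ha i
    _ = ∏ i ∈ s, (exp (a i))⁻¹ := by simp only [← sum_neg_distrib, exp_sum, exp_neg]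
    _ ≤ ∏ i ∈ s, (1 + a i)⁻¹ :=
        prod_le_prod (fun i _ => by positivity) fun i _ =>
          inv_anti₀ (by linarith [ha i]) (by linarith [add_one_le_exp (a i)])

section StepsAcrossOneEdge

variable {V : Type*} [DecidableEq V] {γ : ℕ → V} {e : Sym2 V}

lemma ntrav_of_forall_step_eq (hγ : ∀ t, s(γ t, γ (t + 1)) = e) (t : ℕ) (e' : Sym2 V) :
    ntrav γ t e' = if e = e' then t else 0 := by
  unfold ntrav
  simp only [hγ]
  split_ifs <;> simp [*]

variable (G : SimpleGraph V) [∀ v : V, Fintype (G.neighborSet v)]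

lemma sum_neighborFinset_ntrav_of_forall_step_eq (f : ℕ → ℝ) (he : e ∈ G.edgeSet)
    (hγ : ∀ t, s(γ t, γ (t + 1)) = e) (t : ℕ) :
    ∑ z ∈ G.neighborFinset (γ t), f (ntrav γ t s(γ t, z)) =
      G.degree (γ t) * f 0 + (f t - f 0) := by
  have hadj : G.Adj (γ t) (γ (t + 1)) := (G.mem_edgeSet).1 (hγ t ▸ he)
  have hterm : ∀ z,
      f (ntrav γ t s(γ t, z)) = f 0 + if z = γ (t + 1) then f t - f 0 else 0 := by
    intro z
    simp only [ntrav_of_forall_step_eq hγ, ← hγ t, Sym2.congr_right]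
    by_cases hz : z = γ (t + 1) <;> simp [hz, Ne.symm]
  simp only [hterm, sum_add_distrib, sum_const, G.card_neighborFinset_eq_degree, sum_ite_eq',
    G.mem_neighborFinset, hadj, if_true, nsmul_eq_mul]

lemma pathProb_of_forall_step_eq (f : ℕ → ℝ) (he : e ∈ G.edgeSet)
    (hγ : ∀ t, s(γ t, γ (t + 1)) = e) (l : ℕ) :
    pathProb G f γ l = ∏ i ∈ range l, f i / (G.degree (γ i) * f 0 + (f i - f 0)) := by
  refine prod_congr rfl fun i _ => ?_
  rw [sum_neighborFinset_ntrav_of_forall_step_eq G f he hγ, ntrav_of_forall_step_eq hγ,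
    hγ i, if_pos rfl]

end StepsAcrossOneEdge

section AlternatingWalk

variable {V : Type*}

def alternatingWalk (x y : V) (t : ℕ) : V := if t % 2 = 0 then x else y

lemma alternatingWalk_step (x y : V) (t : ℕ) :
    s(alternatingWalk x y t, alternatingWalk x y (t + 1)) = s(x, y) := by
  rcases Nat.mod_two_eq_zero_or_one t with ht | ht
  · simp [alternatingWalk, ht, Nat.succ_mod_two_eq_one_iff.2 ht]
  · simp [alternatingWalk, ht, Nat.succ_mod_two_eq_zero_iff.2 ht, Sym2.eq_swap]

lemma alternatingWalk_eq_or_eq (x y : V) (t : ℕ) :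
    alternatingWalk x y t = x ∨ alternatingWalk x y t = y := by
  unfold alternatingWalk
  split_ifs <;> simp

end AlternatingWalk

lemma inv_one_add_mul_inv_one_add_le_div {b d D : ℝ} (hb : 0 ≤ b) (hd : 1 ≤ d)
    (hdD : d ≤ D) :
    (1 + (D - 1) * (1 + b)⁻¹)⁻¹ ≤ (1 + b) / (d + b) := by
  calc (1 + (D - 1) * (1 + b)⁻¹)⁻¹ = (1 + b) / (D + b) := by
        field_simp
        ring
    _ ≤ (1 + b) / (d + b) := div_le_div_of_nonneg_left (by linarith) (by linarith) (by linarith)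

/-- For reinforced random walk with reinforcement function `f(n) = 1 + n²` on
an arbitrary locally finite graph `G`, started at `x₀`, and any edge
`e = (x₀, y)`, with positive probability the walk oscillates across `e`
forever, i.e. `x_{2t} = x₀` and `x_{2t+1} = y` for all `t`.  (The infinite
oscillation event is the decreasing intersection of the cylinder events that
the walk follows the alternating path for `l` steps, so its probability is the
infimum of their probabilities; positivity is stated as a uniform positive
lower bound `c` on these cylinder probabilities.) -/
theorem superlinear_sticks_with_positive_probability {V : Type*} [DecidableEq V]
    (G : SimpleGraph V) [∀ v : V, Fintype (G.neighborSet v)]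
    (x₀ y : V) (h : G.Adj x₀ y) :
    ∃ c > (0:ℝ), ∀ l : ℕ,
      c ≤ pathProb G (fun n => 1 + (n : ℝ)^2)
            (fun t => if t % 2 = 0 then x₀ else y) l := by
  set D : ℝ := max (G.degree x₀ : ℝ) (G.degree y)
  have hdeg : ∀ t, 1 ≤ (G.degree (alternatingWalk x₀ y t) : ℝ) ∧
      (G.degree (alternatingWalk x₀ y t) : ℝ) ≤ D := by
    have hx : 0 < G.degree x₀ := (G.degree_pos_iff_exists_adj x₀).2 ⟨y, h⟩
    have hy : 0 < G.degree y := (G.degree_pos_iff_exists_adj y).2 ⟨x₀, h.symm⟩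
    intro t
    rcases alternatingWalk_eq_or_eq x₀ y t with ht | ht <;> rw [ht]
    · exact ⟨by exact_mod_cast hx, le_max_left _ _⟩
    · exact ⟨by exact_mod_cast hy, le_max_right _ _⟩
  have ha : ∀ i : ℕ, 0 ≤ (D - 1) * (1 + (i : ℝ) ^ 2)⁻¹ := fun i =>
    mul_nonneg (by linarith [(hdeg 0).1, (hdeg 0).2]) (by positivity)
  refine ⟨exp (-∑' i : ℕ, (D - 1) * (1 + (i : ℝ) ^ 2)⁻¹), exp_pos _, fun l => ?_⟩
  change _ ≤ pathProb G _ (alternatingWalk x₀ y) l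
  rw [pathProb_of_forall_step_eq G _ ((G.mem_edgeSet).2 h) (alternatingWalk_step x₀ y)]
  refine (exp_neg_tsum_le_prod_inv_one_add ha (summable_inv_one_add_sq.mul_left _) _).trans
    (prod_le_prod (fun i _ => inv_nonneg.2 (by linarith [ha i])) fun i _ => ?_)
  simpa using inv_one_add_mul_inv_one_add_le_div (sq_nonneg (i : ℝ)) (hdeg i).1 (hdeg i).2
end

section
/- Linearly reinforced random walk is partially exchangeable: for any two finite paths γ and γ' in G starting at x₀, of the same length, ending at the same vertex, and such that every undirected edge is traversed the same number of times by γ and by γ', the probabilities that the LRRW begins with γ and with γ' are equal. -/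
/-! The `i`-th numerator of `pathProb` is `a + k`, where `k` counts the earlier traversals of the
edge being crossed, so the product of the numerators is `∏ₑ ∏_{k < N(e)} (a + k)` and depends only
on the final edge counts `N(e)`. The `i`-th denominator is `a · deg v + 2j + 1 - [v = x₀]` with
`v = γ i` and `j` the number of earlier visits to `v`: each earlier visit left `v` along one edge,
and each visit except the start arrived along one. Hence the product of the denominators depends
only on the final visit counts, and these are determined by the edge counts (summed around each
vertex) together with the common start and end points. -/

open Finset

section Rearrangement

variable {E M : Type*} [DecidableEq E] [CommMonoid M]

theorem prod_range_count_eq_prod_prod (c : ℕ → E) (F : E → ℕ → M) {S : Finset E} {l : ℕ}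
    (hS : ∀ i < l, c i ∈ S) :
    ∏ i ∈ range l, F (c i) (Nat.count (c · = c i) i)
      = ∏ x ∈ S, ∏ k ∈ range (Nat.count (c · = x) l), F x k := by
  induction l with
  | zero => simp
  | succ l ih =>
    have hstep : ∀ x, ∏ k ∈ range (Nat.count (c · = x) (l + 1)), F x k
        = (∏ k ∈ range (Nat.count (c · = x) l), F x k)
          * if c l = x then F x (Nat.count (c · = x) l) else 1 := by
      intro x
      rw [Nat.count_succ]
      split_ifs <;> simp [prod_range_succ]
    rw [prod_range_succ, ih fun i hi => hS i (by omega), prod_congr rfl fun x _ => hstep x,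
      prod_mul_distrib, prod_ite_eq, if_pos (hS l l.lt_succ_self)]

theorem prod_range_count_congr {c c' : ℕ → E} {l : ℕ}
    (h : ∀ x, Nat.count (c · = x) l = Nat.count (c' · = x) l) (F : E → ℕ → M) :
    ∏ i ∈ range l, F (c i) (Nat.count (c · = c i) i)
      = ∏ i ∈ range l, F (c' i) (Nat.count (c' · = c' i) i) := by
  have hS : ∀ i < l, c i ∈ (range l).image c ∪ (range l).image c' :=
    fun i hi => mem_union_left _ (mem_image_of_mem c (mem_range.2 hi))
  have hS' : ∀ i < l, c' i ∈ (range l).image c ∪ (range l).image c' :=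
    fun i hi => mem_union_right _ (mem_image_of_mem c' (mem_range.2 hi))
  simp only [prod_range_count_eq_prod_prod c F hS, prod_range_count_eq_prod_prod c' F hS', h]

end Rearrangement

theorem SimpleGraph.sum_neighborFinset_ite_sym2_eq {V : Type*} [DecidableEq V] {G : SimpleGraph V}
    [∀ v : V, Fintype (G.neighborSet v)] {x y : V} (hxy : G.Adj x y) (v : V) :
    ∑ z ∈ G.neighborFinset v, (if s(x, y) = s(v, z) then 1 else 0 : ℕ)
      = (if x = v then 1 else 0) + (if y = v then 1 else 0) := by
  by_cases hx : x = v
  · subst hx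
    simp [hxy, hxy.ne.symm]
  by_cases hy : y = v
  · subst hy
    simp [hxy.symm, hxy.ne]
  · simp [hx, hy]

theorem ntrav_eq_count {V : Type*} [DecidableEq V] (γ : ℕ → V) (t : ℕ) (e : Sym2 V) :
    ntrav γ t e = Nat.count (fun s => s(γ s, γ (s + 1)) = e) t :=
  (Nat.count_eq_card_filter_range _ t).symm

theorem count_succ_add_ite {V : Type*} [DecidableEq V] (γ : ℕ → V) (t : ℕ) (v : V) :
    Nat.count (fun s => γ (s + 1) = v) t + (if γ 0 = v then 1 else 0)
      = Nat.count (γ · = v) t + (if γ t = v then 1 else 0) := by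
  rw [← Nat.count_succ' (γ · = v), Nat.count_succ]

section Walk

variable {V : Type*} [DecidableEq V] (G : SimpleGraph V) [∀ v : V, Fintype (G.neighborSet v)]
  {γ : ℕ → V} {t : ℕ}

theorem sum_neighborFinset_ntrav (hadj : ∀ s < t, G.Adj (γ s) (γ (s + 1))) (v : V) :
    ∑ z ∈ G.neighborFinset v, ntrav γ t s(v, z)
      = Nat.count (γ · = v) t + Nat.count (fun s => γ (s + 1) = v) t := by
  simp only [ntrav, card_filter]
  rw [sum_comm, Nat.count_eq_card_filter_range, Nat.count_eq_card_filter_range, card_filter,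
    card_filter, ← sum_add_distrib]
  exact sum_congr rfl fun s hs =>
    SimpleGraph.sum_neighborFinset_ite_sym2_eq (hadj s (mem_range.1 hs)) v

theorem sum_neighborFinset_lrrw_weight (a : ℝ) {i : ℕ} (hadj : ∀ s < i, G.Adj (γ s) (γ (s + 1))) :
    ∑ z ∈ G.neighborFinset (γ i), (a + (ntrav γ i s(γ i, z) : ℝ))
      = a * G.degree (γ i) + (2 * Nat.count (γ · = γ i) i + 1 - if γ 0 = γ i then 1 else 0) := by
  have hshift : (Nat.count (fun s => γ (s + 1) = γ i) i : ℝ) + (if γ 0 = γ i then 1 else 0)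
      = Nat.count (γ · = γ i) i + 1 := by
    exact_mod_cast (count_succ_add_ite γ i (γ i)).trans (by rw [if_pos rfl])
  rw [sum_add_distrib, sum_const, nsmul_eq_mul, ← Nat.cast_sum, sum_neighborFinset_ntrav G hadj,
    SimpleGraph.card_neighborFinset_eq_degree]
  push_cast
  linarith

theorem count_eq_of_ntrav_eq {γ' : ℕ → V} (h0 : γ 0 = γ' 0) (hend : γ t = γ' t)
    (hadj : ∀ s < t, G.Adj (γ s) (γ (s + 1))) (hadj' : ∀ s < t, G.Adj (γ' s) (γ' (s + 1)))
    (hcount : ∀ e, ntrav γ t e = ntrav γ' t e) (v : V) :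
    Nat.count (γ · = v) t = Nat.count (γ' · = v) t := by
  have hdeg := sum_neighborFinset_ntrav G hadj v
  rw [sum_congr rfl fun z _ => hcount s(v, z), sum_neighborFinset_ntrav G hadj'] at hdeg
  have := count_succ_add_ite γ t v
  have := count_succ_add_ite γ' t v
  rw [h0, hend] at *
  omega

end Walk

/-- Linearly reinforced random walk (reinforcement function `a + n`, `a > 0`)
is partially exchangeable: any two paths of the same length `l`, starting at
`x₀`, ending at the same vertex, and traversing every undirected edge the same
number of times, have the same probability. -/
theorem lrrw_partially_exchangeable {V : Type*} [DecidableEq V]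
    (G : SimpleGraph V) [∀ v : V, Fintype (G.neighborSet v)]
    (a : ℝ) (ha : 0 < a) (x₀ : V) (γ γ' : ℕ → V) (l : ℕ)
    (h0 : γ 0 = x₀) (h0' : γ' 0 = x₀)
    (hadj : ∀ i < l, G.Adj (γ i) (γ (i+1)))
    (hadj' : ∀ i < l, G.Adj (γ' i) (γ' (i+1)))
    (hend : γ l = γ' l)
    (hcount : ∀ e : Sym2 V, ntrav γ l e = ntrav γ' l e) :
    pathProb G (fun n => a + (n : ℝ)) γ l = pathProb G (fun n => a + (n : ℝ)) γ' l := by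
  set D : V → ℕ → ℝ := fun v j => a * G.degree v + (2 * j + 1 - if x₀ = v then 1 else 0)
  have hden : ∀ δ : ℕ → V, δ 0 = x₀ → (∀ i < l, G.Adj (δ i) (δ (i + 1))) →
      ∏ i ∈ range l, ∑ z ∈ G.neighborFinset (δ i), (a + (ntrav δ i s(δ i, z) : ℝ))
        = ∏ i ∈ range l, D (δ i) (Nat.count (δ · = δ i) i) := by
    intro δ hδ0 hδadj
    refine prod_congr rfl fun i hi => ?_
    rw [sum_neighborFinset_lrrw_weight G a fun s hs => hδadj s (hs.trans (mem_range.1 hi)), hδ0]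
  have hvisits := count_eq_of_ntrav_eq G (h0.trans h0'.symm) hend hadj hadj' hcount
  unfold pathProb
  rw [prod_div_distrib, prod_div_distrib, hden γ h0 hadj, hden γ' h0' hadj',
    prod_range_count_congr hvisits D]
  simp only [ntrav_eq_count] at hcount ⊢
  rw [prod_range_count_congr hcount (fun _ n => a + (n : ℝ))]
end

section
/- Let f: ℕ → (0,∞) with Σ_{n=0}^∞ 1/f(n) < ∞ and f increasing. For reinforced random walk with reinforcement f on the 3-vertex path graph started at the middle vertex, with positive probability the walk never traverses the right edge (i.e. gets stuck oscillating on the left edge). -/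
/-- The path graph on three vertices `0 – 1 – 2`. -/
def threePath : SimpleGraph (Fin 3) where
  Adj i j := (i.val + 1 = j.val) ∨ (j.val + 1 = i.val)
  symm := by constructor; intro i j hij; tauto
  loopless := by constructor; intro i hi; omega

instance : DecidableRel threePath.Adj :=
  fun i j => inferInstanceAs (Decidable (_ ∨ _))

/-! Along the walk `1, 0, 1, 0, …` the left edge has been crossed `i` times before step `i` and the
right edge never, so a step from `1` has probability `f i / (f i + f 0) ≥ exp (-(f 0 / f i))` and a
step from `0` has probability `1`. Hence every cylinder probability is at least
`exp (-f 0 * Σ 1 / f n) > 0`. -/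

open Finset Real

lemma exp_neg_div_le_div_add {a b : ℝ} (ha : 0 < a) (hb : 0 ≤ b) :
    exp (-(b / a)) ≤ a / (a + b) := by
  have hab : a / (a + b) = (1 + b / a)⁻¹ := by field_simp
  rw [hab, exp_neg]
  exact inv_anti₀ (by positivity) (by linarith [add_one_le_exp (b / a)])

lemma exp_neg_tsum_le_prod {ι : Type*} {x a : ι → ℝ} (hx : Summable x) (hx0 : ∀ i, 0 ≤ x i)
    (ha : ∀ i, exp (-x i) ≤ a i) (s : Finset ι) :
    exp (-∑' i, x i) ≤ ∏ i ∈ s, a i :=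
  calc exp (-∑' i, x i) ≤ exp (-∑ i ∈ s, x i) :=
        exp_le_exp.2 (neg_le_neg (hx.sum_le_tsum s fun i _ => hx0 i))
    _ = ∏ i ∈ s, exp (-x i) := by rw [← sum_neg_distrib, exp_sum]
    _ ≤ ∏ i ∈ s, a i := prod_le_prod (fun i _ => (exp_pos _).le) fun i _ => ha i

def oscillateLeft (t : ℕ) : Fin 3 := if t % 2 = 0 then 1 else 0

lemma oscillateLeft_edge (s : ℕ) : s(oscillateLeft s, oscillateLeft (s + 1)) = s(0, 1) := by
  rcases Nat.mod_two_eq_zero_or_one s with h | h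
  · simp [oscillateLeft, h, Nat.succ_mod_two_eq_one_iff.2 h, Sym2.eq_swap]
  · simp [oscillateLeft, h, Nat.succ_mod_two_eq_zero_iff.2 h]

lemma ntrav_oscillateLeft_left (t : ℕ) : ntrav oscillateLeft t s(0, 1) = t := by
  rw [ntrav, filter_true_of_mem fun s _ => oscillateLeft_edge s, card_range]

lemma ntrav_oscillateLeft_right (t : ℕ) : ntrav oscillateLeft t s(1, 2) = 0 := by
  rw [ntrav, card_eq_zero, filter_eq_empty_iff]
  intro s _
  rw [oscillateLeft_edge s]
  decide

lemma pathProb_oscillateLeft (f : ℕ → ℝ) (l : ℕ) :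
    pathProb threePath f oscillateLeft l =
      ∏ i ∈ range l, if i % 2 = 0 then f i / (f i + f 0) else f i / f i := by
  refine prod_congr rfl fun i _ => ?_
  rcases Nat.mod_two_eq_zero_or_one i with h | h
  · have hstep : oscillateLeft i = 1 ∧ oscillateLeft (i + 1) = 0 := by
      simp [oscillateLeft, h, Nat.succ_mod_two_eq_one_iff.2 h]
    have hnbr : threePath.neighborFinset 1 = {0, 2} := by decide
    rw [hstep.1, hstep.2, hnbr, sum_pair (by decide), Sym2.eq_swap, ntrav_oscillateLeft_left,
      ntrav_oscillateLeft_right, if_pos h]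
  · have hstep : oscillateLeft i = 0 ∧ oscillateLeft (i + 1) = 1 := by
      simp [oscillateLeft, h, Nat.succ_mod_two_eq_zero_iff.2 h]
    have hnbr : threePath.neighborFinset 0 = {1} := by decide
    rw [hstep.1, hstep.2, hnbr, sum_singleton, ntrav_oscillateLeft_left, if_neg (by omega)]

theorem summable_reciprocal_sticks_on_three_path_general (f : ℕ → ℝ)
    (hpos : ∀ n, 0 < f n)
    (hsum : Summable fun n => 1 / f n) :
    ∃ c > (0:ℝ), ∀ l : ℕ,
      c ≤ pathProb threePath f (fun t => if t % 2 = 0 then 1 else 0) l := by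
  have hratio : ∀ n, 0 ≤ f 0 / f n := fun n => (div_pos (hpos 0) (hpos n)).le
  refine ⟨exp (-∑' n, f 0 / f n), exp_pos _, fun l => ?_⟩
  change _ ≤ pathProb threePath f oscillateLeft l
  rw [pathProb_oscillateLeft]
  refine exp_neg_tsum_le_prod ((hsum.mul_left (f 0)).congr fun n => mul_one_div _ _) hratio (fun i => ?_) _
  split_ifs
  · exact exp_neg_div_le_div_add (hpos i) (hpos 0).le
  · rw [div_self (hpos i).ne', exp_le_one_iff, neg_nonpos]
    exact hratio i

/-- For a reinforcement function `f` which is increasing and satisfies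
`Σ 1/f(n) < ∞`, reinforced random walk on the 3-vertex path started at the
middle vertex `1` gets stuck oscillating on the left edge with positive
probability: never traversing the right edge for the first `l` steps means
following the alternating path `1,0,1,0,…`, and these cylinder probabilities
admit a uniform positive lower bound `c`, so the intersection event (never
traversing the right edge) has probability at least `c > 0`. -/
theorem summable_reciprocal_sticks_on_three_path (f : ℕ → ℝ)
    (hpos : ∀ n, 0 < f n) (hmono : Monotone f)
    (hsum : Summable fun n => 1 / f n) :
    ∃ c > (0:ℝ), ∀ l : ℕ,
      c ≤ pathProb threePath f (fun t => if t % 2 = 0 then 1 else 0) l :=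
  summable_reciprocal_sticks_on_three_path_general f hpos hsum
end
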